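/- Define C(n,k,x) := Σ_{j=0}^{min(n,k)} j! · (x+1)^{(j)} · S(n+1, j+1) · S(k+1, j+1). Then for all integers n, k ≥ 0, Σ_{ℓ=0}^{n} c(n+1, ℓ+1) · C(ℓ, k, x) = n! · Σ_{j=0}^{min(n,k)} (x+1)^{(j)} · S(k+1, j+1) · binom(n+1, j+1), as polynomials in x. -/

import Mathlib

open Finset

/-- Stirling numbers of the second kind. -/
def stirling2 : ℕ → ℕ → ℕ
  | 0, 0 => 1
  | 0, _ + 1 => 0
  | _ + 1, 0 => 0
  | n + 1, k + 1 => (k + 1) * stirling2 n (k + 1) + stirling2 n k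

/-- Unsigned Stirling numbers of the first kind. -/
def stirling1 : ℕ → ℕ → ℕ
  | 0, 0 => 1
  | 0, _ + 1 => 0
  | _ + 1, 0 => 0
  | n + 1, k + 1 => n * stirling1 n (k + 1) + stirling1 n k

/-- The Callan polynomial, evaluated at x : ℚ. -/
def callan (n k : ℕ) (x : ℚ) : ℚ :=
  ∑ j ∈ Finset.range (min n k + 1),
    (j.factorial : ℚ) * (∏ i ∈ Finset.range j, (x + 1 + i)) *
      stirling2 (n + 1) (j + 1) * stirling2 (k + 1) (j + 1)

/-!
Expanding `callan l k x` and exchanging the two sums, the coefficient of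
`j! (x+1)^{(j)} S(k+1, j+1)` becomes `∑_l c(n+1, l+1) S(l+1, j+1)`, the Lah number `L(n+1, j+1)`.
The Lah recurrence `L(m+1, j+1) = (m+j+1) L(m, j+1) + L(m, j)` follows from the recurrences of
the two Stirling triangles, and gives `j! L(n+1, j+1) = n! (n+1).choose (j+1)` by induction on `n`.
-/

open scoped Nat

lemma stirling1_eq_stirlingFirst : stirling1 = Nat.stirlingFirst := by
  funext n k
  induction n generalizing k with
  | zero => cases k <;> rfl
  | succ n ih => cases k <;> simp [stirling1, Nat.stirlingFirst_succ_succ, ih]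

lemma stirling2_eq_stirlingSecond : stirling2 = Nat.stirlingSecond := by
  funext n k
  induction n generalizing k with
  | zero => cases k <;> rfl
  | succ n ih => cases k <;> simp [stirling2, Nat.stirlingSecond_succ_succ, ih]

namespace Nat

lemma mul_choose_add_succ_mul_choose_succ (m j : ℕ) :
    j * m.choose j + (j + 1) * m.choose (j + 1) = m * m.choose j := by
  rw [mul_comm (j + 1), choose_succ_right_eq]
  rcases le_or_gt j m with h | h
  · rw [mul_comm m, mul_comm j, ← mul_add, Nat.add_sub_cancel' h]
  · simp [choose_eq_zero_of_lt h]

/-- The Lah number `L(n+1, j)`, as an entry of the product of the two Stirling matrices. -/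
def lah (n j : ℕ) : ℕ :=
  ∑ l ∈ range (n + 1), stirlingFirst (n + 1) (l + 1) * stirlingSecond (l + 1) j

lemma lah_zero_left (j : ℕ) : lah 0 j = stirlingSecond 1 j := by
  simp [lah, stirlingFirst_self]

lemma lah_zero_right (n : ℕ) : lah n 0 = 0 := by
  simp [lah]

lemma lah_succ_succ (n j : ℕ) :
    lah (n + 1) (j + 1) = (n + j + 2) * lah n (j + 1) + lah n j := by
  have top : ∑ l ∈ range (n + 2), stirlingFirst (n + 1) (l + 1) * stirlingSecond (l + 1) (j + 1)
      = lah n (j + 1) := by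
    rw [sum_range_succ, stirlingFirst_eq_zero_of_lt (by omega), zero_mul, add_zero, lah]
  have shifted : ∑ l ∈ range (n + 2), stirlingFirst (n + 1) l * stirlingSecond (l + 1) (j + 1)
      = (j + 1) * lah n (j + 1) + lah n j := by
    simp only [sum_range_succ' _ (n + 1), stirlingFirst_succ_zero, zero_mul, add_zero,
      stirlingSecond_succ_succ, lah, mul_sum, ← sum_add_distrib]
    exact sum_congr rfl fun l _ => by ring
  have recurrence : ∀ l, stirlingFirst (n + 2) (l + 1) * stirlingSecond (l + 1) (j + 1) =
      (n + 1) * (stirlingFirst (n + 1) (l + 1) * stirlingSecond (l + 1) (j + 1)) +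
        stirlingFirst (n + 1) l * stirlingSecond (l + 1) (j + 1) := fun l => by
    rw [stirlingFirst_succ_succ, add_mul, mul_assoc]
  rw [lah, sum_congr rfl fun l _ => recurrence l, sum_add_distrib, ← mul_sum, top, shifted]
  ring

lemma lah_mul_factorial (n j : ℕ) : lah n j * j ! = n ! * (j * (n + 1).choose j) := by
  induction n generalizing j with
  | zero =>
    rcases j with _ | _ | j
    · simp [lah_zero_right]
    · rfl
    · simp [lah_zero_left, stirlingSecond_eq_zero_of_lt, choose_eq_zero_of_lt]
  | succ n ih =>
    rcases j with _ | j
    · simp [lah_zero_right]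
    have pascal := mul_choose_add_succ_mul_choose_succ (n + 1) j
    calc lah (n + 1) (j + 1) * (j + 1)!
        = (n + j + 2) * (lah n (j + 1) * (j + 1)!) + (j + 1) * (lah n j * j !) := by
          rw [lah_succ_succ, factorial_succ]; ring
      _ = (n + j + 2) * (n ! * ((j + 1) * (n + 1).choose (j + 1))) +
            (j + 1) * (n ! * (j * (n + 1).choose j)) := by rw [ih, ih]
      _ = (n + 1)! * ((j + 1) * (n + 2).choose (j + 1)) := by
          rw [choose_succ_succ (n + 1) j, factorial_succ]
          linear_combination (n ! * (j + 1)) * pascal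

lemma lah_succ_mul_factorial (n j : ℕ) : lah n (j + 1) * j ! = n ! * (n + 1).choose (j + 1) := by
  have h := lah_mul_factorial n (j + 1)
  rw [factorial_succ, mul_left_comm, mul_left_comm (n !)] at h
  exact Nat.eq_of_mul_eq_mul_left j.succ_pos h

end Nat

lemma callan_eq_sum_range {l N : ℕ} (k : ℕ) (x : ℚ) (hl : l ≤ N) :
    callan l k x = ∑ j ∈ range (min N k + 1), (j ! : ℚ) * (∏ i ∈ range j, (x + 1 + i)) *
      Nat.stirlingSecond (l + 1) (j + 1) * Nat.stirlingSecond (k + 1) (j + 1) := by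
  rw [callan, stirling2_eq_stirlingSecond]
  refine sum_subset (range_subset_range.2 (by omega)) fun j hj hjl => ?_
  simp only [mem_range] at hj hjl
  rw [Nat.stirlingSecond_eq_zero_of_lt (by omega : l + 1 < j + 1)]
  simp

theorem stmt6 (n k : ℕ) (x : ℚ) :
    ∑ l ∈ Finset.range (n + 1), (stirling1 (n + 1) (l + 1) : ℚ) * callan l k x =
      (n.factorial : ℚ) *
        ∑ j ∈ Finset.range (min n k + 1),
          (∏ i ∈ Finset.range j, (x + 1 + i)) * stirling2 (k + 1) (j + 1) *
            ((n + 1).choose (j + 1)) := by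
  rw [stirling1_eq_stirlingFirst, stirling2_eq_stirlingSecond, mul_sum]
  calc _ = ∑ l ∈ range (n + 1), ∑ j ∈ range (min n k + 1),
          (Nat.stirlingFirst (n + 1) (l + 1) : ℚ) * ((j ! : ℚ) * (∏ i ∈ range j, (x + 1 + i)) *
            Nat.stirlingSecond (l + 1) (j + 1) * Nat.stirlingSecond (k + 1) (j + 1)) :=
        sum_congr rfl fun l hl => by
          rw [callan_eq_sum_range k x (mem_range_succ_iff.1 hl), mul_sum]
    _ = _ := by
      rw [sum_comm]
      refine sum_congr rfl fun j _ => ?_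
      have lah_eq : ((Nat.lah n (j + 1) * j ! : ℕ) : ℚ) = n ! * (n + 1).choose (j + 1) := by
        rw [Nat.lah_succ_mul_factorial]; push_cast; rfl
      rw [← mul_assoc, mul_right_comm (n ! : ℚ), ← lah_eq, Nat.lah]
      push_cast
      simp only [sum_mul]
      exact sum_congr rfl fun l _ => by ring
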